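/- arXiv:2107.14570 — 2 statements merged into one kernel-verified Lean document; each statement's English description precedes it below -/
import Mathlib

section
/- Let k ≥ 1 and Δ ≥ 2^k be integers. Let μ be the number of successes among at most Δ independent Bernoulli trials, each with success probability at most 2/Δ⁴. Then for every integer t ≥ 1 it holds that Pr[μ ≥ t] ≤ exp(−t) ≤ (1 − Δ^{−1/k})^t. -/
/-!
A union bound over the `t`-element sets of trials: `t` successes force all trials of some such set
to succeed, so by independence `Pr[μ ≥ t] ≤ (N choose t) p^t ≤ (N p)^t`. With `N ≤ Δ`,
`p ≤ 2/Δ⁴` and `Δ ≥ 2` the base `N p ≤ 2/Δ³ ≤ 1/4` is below `e⁻¹`, while `Δ ≥ 2^k` gives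
`Δ^{-1/k} ≤ 1/2 ≤ 1 - e⁻¹`.
-/

open MeasureTheory ProbabilityTheory Finset

section UnionBound

variable {Ω ι : Type*} [Fintype ι]

lemma setOf_le_card_filter_mem_subset (A : ι → Set Ω) [∀ ω i, Decidable (ω ∈ A i)] (t : ℕ) :
    {ω | t ≤ #{i | ω ∈ A i}} ⊆ ⋃ S ∈ powersetCard t univ, ⋂ i ∈ S, A i := by
  intro ω hω
  obtain ⟨S, hS, hScard⟩ := exists_subset_card_eq hω
  refine Set.mem_biUnion (mem_powersetCard.2 ⟨subset_univ S, hScard⟩) (Set.mem_iInter₂.2 ?_)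
  exact fun i hi ↦ (mem_filter.1 (hS hi)).2

lemma measure_le_card_filter_mem_le [MeasurableSpace Ω] {μ : Measure Ω} {A : ι → Set Ω}
    [∀ ω i, Decidable (ω ∈ A i)] (hA : iIndepSets (fun i ↦ {A i}) μ)
    {p : ENNReal} (hp : ∀ i, μ (A i) ≤ p) (t : ℕ) :
    μ {ω | t ≤ #{i | ω ∈ A i}} ≤ (Fintype.card ι).choose t * p ^ t := by
  calc μ {ω | t ≤ #{i | ω ∈ A i}}
      ≤ μ (⋃ S ∈ powersetCard t univ, ⋂ i ∈ S, A i) :=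
        measure_mono (setOf_le_card_filter_mem_subset A t)
    _ ≤ ∑ S ∈ powersetCard t univ, μ (⋂ i ∈ S, A i) := measure_biUnion_finset_le _ _
    _ = ∑ S ∈ powersetCard t univ, ∏ i ∈ S, μ (A i) :=
        sum_congr rfl fun S _ ↦ iIndepSets_singleton_iff.1 hA S
    _ ≤ ∑ _S ∈ powersetCard t (univ : Finset ι), p ^ t := by
        refine sum_le_sum fun S hS ↦ ?_
        rw [← (mem_powersetCard.1 hS).2, ← prod_const]
        exact prod_le_prod' fun i _ ↦ hp i
    _ = (Fintype.card ι).choose t * p ^ t := by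
        rw [sum_const, card_powersetCard, card_univ, nsmul_eq_mul]

lemma sum_eq_card_filter_eq_one {X : ι → ℕ} (h01 : ∀ i, X i = 0 ∨ X i = 1) :
    ∑ i, X i = #{i | X i = 1} := by
  rw [card_eq_sum_ones, sum_filter]
  exact sum_congr rfl fun i _ ↦ by rcases h01 i with h | h <;> simp [h]

lemma measure_le_sum_bernoulli_le [MeasurableSpace Ω] {μ : Measure Ω} {X : ι → Ω → ℕ}
    (h01 : ∀ i ω, X i ω = 0 ∨ X i ω = 1) (hindep : iIndepFun X μ)
    {p : ENNReal} (hp : ∀ i, μ {ω | X i ω = 1} ≤ p) (t : ℕ) :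
    μ {ω | t ≤ ∑ i, X i ω} ≤ (Fintype.card ι).choose t * p ^ t := by
  have hA : iIndepSets (fun i ↦ {{ω | X i ω = 1}}) μ :=
    iIndepSets_singleton_iff.2 fun S ↦
      hindep.meas_biInter fun i _ ↦ ⟨{1}, measurableSet_singleton 1, rfl⟩
  simp_rw [sum_eq_card_filter_eq_one (h01 · _)]
  exact measure_le_card_filter_mem_le hA hp t

end UnionBound

lemma choose_mul_pow_le_exp_neg {Δ : ℝ} (hΔ : 2 ≤ Δ) {N : ℕ} (hN : N ≤ Δ) (t : ℕ) :
    (N.choose t : ℝ) * (2 / Δ ^ 4) ^ t ≤ Real.exp (-t) := by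
  have hbase : Δ * (2 / Δ ^ 4) ≤ Real.exp (-1) := by
    have hcube : Δ * (2 / Δ ^ 4) = 2 / Δ ^ 3 := by field_simp
    have h8 : (8 : ℝ) ≤ Δ ^ 3 := by nlinarith [pow_le_pow_left₀ zero_le_two hΔ 3]
    rw [hcube, div_le_iff₀ (by positivity)]
    nlinarith [Real.exp_neg_one_gt_d9]
  calc (N.choose t : ℝ) * (2 / Δ ^ 4) ^ t
      ≤ Δ ^ t * (2 / Δ ^ 4) ^ t := by
        have hchoose : (N.choose t : ℝ) ≤ N ^ t := by exact_mod_cast N.choose_le_pow t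
        gcongr
        exact hchoose.trans (pow_le_pow_left₀ N.cast_nonneg hN t)
    _ = (Δ * (2 / Δ ^ 4)) ^ t := (mul_pow _ _ _).symm
    _ ≤ Real.exp (-1) ^ t := pow_le_pow_left₀ (by positivity) hbase t
    _ = Real.exp (-t) := by rw [← Real.exp_nat_mul]; ring_nf

lemma rpow_neg_one_div_le_half {k : ℕ} (hk : 1 ≤ k) {Δ : ℝ} (hΔ : 2 ^ k ≤ Δ) :
    Δ ^ (-(1 : ℝ) / k) ≤ 1 / 2 := by
  have hk0 : (k : ℝ) ≠ 0 := by exact_mod_cast (by omega : k ≠ 0)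
  have hroot : 2 ≤ Δ ^ ((1 : ℝ) / k) := by
    calc (2 : ℝ) = ((2 : ℝ) ^ k) ^ ((1 : ℝ) / k) := by
          rw [← Real.rpow_natCast, ← Real.rpow_mul zero_le_two, mul_one_div_cancel hk0,
            Real.rpow_one]
      _ ≤ Δ ^ ((1 : ℝ) / k) := by gcongr
  rw [neg_div, Real.rpow_neg ((pow_nonneg zero_le_two k).trans hΔ), one_div (2 : ℝ)]
  exact inv_anti₀ two_pos hroot

theorem early_count_tail_general
    {Ω : Type*} [MeasurableSpace Ω] (μ : Measure Ω)
    (k Δ : ℕ) (hk : 1 ≤ k) (hΔ : 2 ^ k ≤ Δ)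
    (N : ℕ) (hN : N ≤ Δ)
    (X : Fin N → Ω → ℕ)
    (h01 : ∀ i ω, X i ω = 0 ∨ X i ω = 1)
    (hp : ∀ i, μ {ω | X i ω = 1} ≤ ENNReal.ofReal (2 / (Δ : ℝ) ^ 4))
    (hindep : iIndepFun X μ)
    (t : ℕ) :
    μ {ω | t ≤ ∑ i, X i ω} ≤ ENNReal.ofReal (Real.exp (-(t : ℝ))) ∧
    Real.exp (-(t : ℝ)) ≤ (1 - (Δ : ℝ) ^ (-(1 : ℝ) / k)) ^ t := by
  have hΔR : (2 : ℝ) ^ k ≤ Δ := by exact_mod_cast hΔ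
  have hΔ2 : (2 : ℝ) ≤ Δ := (le_self_pow₀ one_le_two (by omega)).trans hΔR
  refine ⟨?_, ?_⟩
  · calc μ {ω | t ≤ ∑ i, X i ω}
        ≤ N.choose t * ENNReal.ofReal (2 / (Δ : ℝ) ^ 4) ^ t := by
          simpa only [Fintype.card_fin] using measure_le_sum_bernoulli_le h01 hindep hp t
      _ = ENNReal.ofReal ((N.choose t : ℝ) * (2 / (Δ : ℝ) ^ 4) ^ t) := by
          rw [ENNReal.ofReal_mul (by positivity), ENNReal.ofReal_pow (by positivity),
            ENNReal.ofReal_natCast]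
      _ ≤ ENNReal.ofReal (Real.exp (-(t : ℝ))) :=
          ENNReal.ofReal_le_ofReal (choose_mul_pow_le_exp_neg hΔ2 (by exact_mod_cast hN) t)
  · have hbase : Real.exp (-1) ≤ 1 - (Δ : ℝ) ^ (-(1 : ℝ) / k) := by
      linarith [Real.exp_neg_one_lt_half, rpow_neg_one_div_le_half hk hΔR]
    calc Real.exp (-(t : ℝ)) = Real.exp (-1) ^ t := by rw [← Real.exp_nat_mul]; ring_nf
      _ ≤ (1 - (Δ : ℝ) ^ (-(1 : ℝ) / k)) ^ t := pow_le_pow_left₀ (Real.exp_pos _).le hbase t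

/-- If `μ` counts the successes among at most `Δ` independent Bernoulli trials,
each with success probability at most `2/Δ⁴`, where `Δ ≥ 2^k`, then for every
integer `t ≥ 1` we have `Pr[μ ≥ t] ≤ exp(-t) ≤ (1 - Δ^{-1/k})^t`. -/
theorem early_count_tail
    {Ω : Type*} [MeasurableSpace Ω] (μ : Measure Ω) [IsProbabilityMeasure μ]
    (k Δ : ℕ) (hk : 1 ≤ k) (hΔ : 2 ^ k ≤ Δ)
    (N : ℕ) (hN : N ≤ Δ)
    (X : Fin N → Ω → ℕ)
    (hmeas : ∀ i, Measurable (X i))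
    (h01 : ∀ i ω, X i ω = 0 ∨ X i ω = 1)
    (hp : ∀ i, μ {ω | X i ω = 1} ≤ ENNReal.ofReal (2 / (Δ : ℝ) ^ 4))
    (hindep : iIndepFun X μ)
    (t : ℕ) (ht : 1 ≤ t) :
    μ {ω | t ≤ ∑ i, X i ω} ≤ ENNReal.ofReal (Real.exp (-(t : ℝ))) ∧
    Real.exp (-(t : ℝ)) ≤ (1 - (Δ : ℝ) ^ (-(1 : ℝ) / k)) ^ t :=
  early_count_tail_general μ k Δ hk hΔ N hN X h01 hp hindep t
end

section
/- Let k ≥ 3 and Δ ≥ 2 be integers, let D ≥ 1 be a real number with 4k/D ≤ 1, and let M be an integer with M ≤ D/(4·Δ^{1/k}). Let X be binomially distributed with parameters M and 4k/D. Then Pr[X ≥ 3k] ≤ 1/Δ². -/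
/-!
A union bound over the `3k`-sets of beeping elements gives
`Pr[X ≥ 3k] ≤ C(M, 3k) p^{3k} ≤ (M p)^{3k} / (3k)!` with `p = 4k/D`. The mean satisfies
`M p ≤ k / Δ^{1/k}`, and `k^{3k} ≤ (3k)!` because `n^n / n! ≤ e^n` and `e ≤ 3`; so the tail is
at most `Δ^{-3}`.
-/

open MeasureTheory ProbabilityTheory Finset

open scoped Nat

theorem pow_le_factorial_three_mul (k : ℕ) : k ^ (3 * k) ≤ (3 * k)! := by
  have hexp : Real.exp ((3 * k : ℕ) : ℝ) ≤ 3 ^ (3 * k) := by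
    rw [← Real.exp_one_pow]
    gcongr
    exact Real.exp_one_lt_d9.le.trans (by norm_num)
  have hpow_self : ((3 * k : ℕ) : ℝ) ^ (3 * k) ≤ Real.exp ((3 * k : ℕ) : ℝ) * (3 * k)! :=
    (div_le_iff₀ (by positivity)).mp (Real.pow_div_factorial_le_exp _ (by positivity) _)
  have : (3 : ℝ) ^ (3 * k) * k ^ (3 * k) ≤ 3 ^ (3 * k) * (3 * k)! := by
    rw [← mul_pow]
    push_cast at hpow_self hexp
    exact hpow_self.trans (by gcongr)
  exact_mod_cast le_of_mul_le_mul_left this (by positivity)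

theorem setOf_le_sum_subset_biUnion_powersetCard {Ω ι : Type*} [Fintype ι] {X : ι → Ω → ℕ}
    (h01 : ∀ i ω, X i ω = 0 ∨ X i ω = 1) (t : ℕ) :
    {ω | t ≤ ∑ i, X i ω} ⊆ ⋃ S ∈ powersetCard t (univ : Finset ι), ⋂ i ∈ S, X i ⁻¹' {1} := by
  classical
  intro ω hω
  have hsum : ∑ i, X i ω = #{i | X i ω = 1} := by
    rw [card_filter]
    exact sum_congr rfl fun i _ ↦ by rcases h01 i ω with h | h <;> simp [h]
  obtain ⟨S, hS, hcard⟩ := exists_subset_card_eq (hsum ▸ hω : t ≤ #{i | X i ω = 1})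
  refine Set.mem_biUnion (mem_powersetCard.mpr ⟨subset_univ S, hcard⟩) ?_
  exact Set.mem_iInter₂.mpr fun i hi ↦ by simpa using (mem_filter.mp (hS hi)).2

theorem measure_le_sum_le_choose_mul_pow {Ω ι : Type*} [MeasurableSpace Ω] {μ : Measure Ω}
    [Fintype ι] {X : ι → Ω → ℕ} {q : ENNReal} (h01 : ∀ i ω, X i ω = 0 ∨ X i ω = 1)
    (hq : ∀ i, μ {ω | X i ω = 1} = q) (hindep : iIndepFun X μ) (t : ℕ) :
    μ {ω | t ≤ ∑ i, X i ω} ≤ (Fintype.card ι).choose t * q ^ t := by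
  have hinter : ∀ S ∈ powersetCard t (univ : Finset ι), μ (⋂ i ∈ S, X i ⁻¹' {1}) = q ^ t := by
    intro S hS
    rw [hindep.meas_biInter fun i _ ↦ ⟨{1}, measurableSet_singleton 1, rfl⟩]
    simp only [Set.preimage, Set.mem_singleton_iff, hq, prod_const, (mem_powersetCard.mp hS).2]
  calc μ {ω | t ≤ ∑ i, X i ω}
      ≤ ∑ S ∈ powersetCard t (univ : Finset ι), μ (⋂ i ∈ S, X i ⁻¹' {1}) :=
        (measure_mono (setOf_le_sum_subset_biUnion_powersetCard h01 t)).trans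
          (measure_biUnion_finset_le _ _)
    _ = (Fintype.card ι).choose t * q ^ t := by
        rw [sum_congr rfl hinter, sum_const, card_powersetCard, card_univ, nsmul_eq_mul]

theorem choose_three_mul_mul_pow_le_inv_sq {k M : ℕ} (hk : k ≠ 0) {Δ p : ℝ} (hΔ : 1 ≤ Δ)
    (hp : 0 ≤ p) (hmean : M * p ≤ k / Δ ^ ((1 : ℝ) / k)) :
    M.choose (3 * k) * p ^ (3 * k) ≤ 1 / Δ ^ 2 := by
  have hroot : (Δ ^ ((1 : ℝ) / k)) ^ (3 * k) = Δ ^ 3 := by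
    rw [← Real.rpow_natCast, ← Real.rpow_mul (by linarith), ← Real.rpow_natCast Δ 3]
    congr 1
    push_cast
    field_simp
  have hfact : ((k : ℕ) : ℝ) ^ (3 * k) ≤ (3 * k)! := by exact_mod_cast pow_le_factorial_three_mul k
  calc (M.choose (3 * k) : ℝ) * p ^ (3 * k)
      ≤ M ^ (3 * k) / (3 * k)! * p ^ (3 * k) := by gcongr; exact Nat.choose_le_pow_div _ _
    _ = (M * p) ^ (3 * k) / (3 * k)! := by ring
    _ ≤ (k / Δ ^ ((1 : ℝ) / k)) ^ (3 * k) / (3 * k)! := by gcongr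
    _ = k ^ (3 * k) / (3 * k)! / Δ ^ 3 := by rw [div_pow, hroot]; ring
    _ ≤ 1 / Δ ^ 3 := by gcongr; exact div_le_one_of_le₀ hfact (by positivity)
    _ ≤ 1 / Δ ^ 2 := one_div_le_one_div_of_le (by positivity) (pow_le_pow_right₀ hΔ (by norm_num))

theorem low_span_beep_bound_general
    {Ω : Type*} [MeasurableSpace Ω] (μ : Measure Ω)
    (k Δ : ℕ) (hk : 3 ≤ k) (hΔ : 2 ≤ Δ)
    (D : ℝ)
    (M : ℕ) (hM : (M : ℝ) ≤ D / (4 * (Δ : ℝ) ^ ((1 : ℝ) / k)))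
    (X : Fin M → Ω → ℕ)
    (h01 : ∀ i ω, X i ω = 0 ∨ X i ω = 1)
    (hp : ∀ i, μ {ω | X i ω = 1} = ENNReal.ofReal ((4 * k : ℝ) / D))
    (hindep : iIndepFun X μ) :
    μ {ω | 3 * k ≤ ∑ i, X i ω} ≤ ENNReal.ofReal (1 / (Δ : ℝ) ^ 2) := by
  set p : ℝ := (4 * k : ℝ) / D
  have hD : 0 ≤ D := by
    simpa using (le_div_iff₀ (by positivity)).mp ((Nat.cast_nonneg M).trans hM)
  have hp0 : 0 ≤ p := div_nonneg (by positivity) hD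
  -- `D / D ≤ 1` rather than `= 1`, since `D = 0` is allowed
  have hmean : M * p ≤ k / (Δ : ℝ) ^ ((1 : ℝ) / k) :=
    calc M * p ≤ D / (4 * (Δ : ℝ) ^ ((1 : ℝ) / k)) * p := by gcongr
      _ = D / D * (k / (Δ : ℝ) ^ ((1 : ℝ) / k)) := by ring
      _ ≤ k / (Δ : ℝ) ^ ((1 : ℝ) / k) :=
        mul_le_of_le_one_left (by positivity) (div_self_le_one D)
  calc μ {ω | 3 * k ≤ ∑ i, X i ω}
      ≤ M.choose (3 * k) * ENNReal.ofReal p ^ (3 * k) := by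
        simpa using measure_le_sum_le_choose_mul_pow h01 hp hindep (3 * k)
    _ = ENNReal.ofReal (M.choose (3 * k) * p ^ (3 * k)) := by
        rw [ENNReal.ofReal_mul (by positivity), ENNReal.ofReal_pow hp0, ENNReal.ofReal_natCast]
    _ ≤ ENNReal.ofReal (1 / (Δ : ℝ) ^ 2) := ENNReal.ofReal_le_ofReal <|
        choose_three_mul_mul_pow_le_inv_sq (by omega) (by exact_mod_cast (by omega : 1 ≤ Δ))
          hp0 hmean

/-- A low-span set rarely receives many Beeps: if `X` is binomially distributed with
parameters `M` and `4k/D`, where `k ≥ 3`, `Δ ≥ 2`, `4k/D ≤ 1` and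
`M ≤ D/(4·Δ^{1/k})`, then `Pr[X ≥ 3k] ≤ 1/Δ²`. -/
theorem low_span_beep_bound
    {Ω : Type*} [MeasurableSpace Ω] (μ : Measure Ω) [IsProbabilityMeasure μ]
    (k Δ : ℕ) (hk : 3 ≤ k) (hΔ : 2 ≤ Δ)
    (D : ℝ) (hD : 1 ≤ D) (hkD : (4 * k : ℝ) / D ≤ 1)
    (M : ℕ) (hM : (M : ℝ) ≤ D / (4 * (Δ : ℝ) ^ ((1 : ℝ) / k)))
    (X : Fin M → Ω → ℕ)
    (hmeas : ∀ i, Measurable (X i))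
    (h01 : ∀ i ω, X i ω = 0 ∨ X i ω = 1)
    (hp : ∀ i, μ {ω | X i ω = 1} = ENNReal.ofReal ((4 * k : ℝ) / D))
    (hindep : iIndepFun X μ) :
    μ {ω | 3 * k ≤ ∑ i, X i ω} ≤ ENNReal.ofReal (1 / (Δ : ℝ) ^ 2) :=
  low_span_beep_bound_general μ k Δ hk hΔ D M hM X h01 hp hindep
end
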